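/- If a permutation p of {1,...,n} avoids the pattern 123 (has no increasing subsequence of length 3) and n ≥ 9, then p² contains an increasing subsequence of length 3. -/

import Mathlib

/-!
If `p` avoids 123, its positions split into the left-to-right minima and the remaining positions,
and both sets are decreasing for `p`; so `p` is decreasing on at least `⌈n/2⌉ ≥ 5` positions.
Applying the same splitting to `p²` on those five positions, either `p²` contains 123 or it is
decreasing on three of them, `a < b < c`. In the latter case `p c < p b < p a` are positions whose
`p`-values increase, a 123 in `p`.
-/

open Finset

section DecreasingSubsequence

variable {ι α : Type*} [LinearOrder ι] [LinearOrder α] {f : ι → α} {s : Finset ι}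

def leftToRightMinima (f : ι → α) (s : Finset ι) : Finset ι :=
  s.filter fun j => ∀ i ∈ s, i < j → f j < f i

theorem strictAntiOn_leftToRightMinima : StrictAntiOn f (leftToRightMinima f s) := by
  intro i hi j hj hij
  exact (mem_filter.1 hj).2 i (mem_filter.1 hi).1 hij

theorem strictAntiOn_sdiff_leftToRightMinima (hf : Set.InjOn f s)
    (h : ¬ ∃ i ∈ s, ∃ j ∈ s, ∃ k ∈ s, i < j ∧ j < k ∧ f i < f j ∧ f j < f k) :
    StrictAntiOn f (↑(s \ leftToRightMinima f s) : Set ι) := by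
  intro i hi j hj hij
  simp only [mem_coe, mem_sdiff, leftToRightMinima, mem_filter, not_and,
    not_forall, not_lt] at hi hj
  obtain ⟨k, hk, hki, hfki⟩ := hi.2 hi.1
  have hfk : f k < f i := hfki.lt_of_ne fun hfe => hki.ne (hf hk hi.1 hfe)
  refine lt_of_not_ge fun hfij => h ⟨k, hk, i, hi.1, j, hj.1, hki, hij, hfk, ?_⟩
  exact hfij.lt_of_ne fun hfe => hij.ne (hf hi.1 hj.1 hfe)

theorem exists_subset_strictAntiOn_card_le_two_mul_card (hf : Set.InjOn f s)
    (h : ¬ ∃ i ∈ s, ∃ j ∈ s, ∃ k ∈ s, i < j ∧ j < k ∧ f i < f j ∧ f j < f k) :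
    ∃ t ⊆ s, #s ≤ 2 * #t ∧ StrictAntiOn f t := by
  have hcard : #(s \ leftToRightMinima f s) + #(leftToRightMinima f s) = #s :=
    card_sdiff_add_card_eq_card (filter_subset _ s)
  rcases le_total #(s \ leftToRightMinima f s) #(leftToRightMinima f s) with hle | hle
  · exact ⟨leftToRightMinima f s, filter_subset _ s, by omega, strictAntiOn_leftToRightMinima⟩
  · exact ⟨s \ leftToRightMinima f s, sdiff_subset, by omega,
      strictAntiOn_sdiff_leftToRightMinima hf h⟩

end DecreasingSubsequence

theorem Equiv.Perm.exists_increasing_triple_of_strictAntiOn_of_strictAntiOn_mul_self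
    {α : Type*} [LinearOrder α] {p : Equiv.Perm α} {u : Finset α} (hu : 3 ≤ #u)
    (hp : StrictAntiOn p u) (hp2 : StrictAntiOn (p * p) u) :
    ∃ i j k, i < j ∧ j < k ∧ p i < p j ∧ p j < p k := by
  let e := u.orderEmbOfCardLe hu
  have he : ∀ a, e a ∈ u := u.orderEmbOfCardLe_mem hu
  have h01 : e 0 < e 1 := e.strictMono (by decide)
  have h12 : e 1 < e 2 := e.strictMono (by decide)
  exact ⟨p (e 2), p (e 1), p (e 0), hp (he 1) (he 2) h12, hp (he 0) (he 1) h01,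
    hp2 (he 1) (he 2) h12, hp2 (he 0) (he 1) h01⟩

theorem sq_contains_123_of_avoids_123 {n : ℕ} (hn : 9 ≤ n) (p : Equiv.Perm (Fin n))
    (h : ¬ ∃ i j k : Fin n, i < j ∧ j < k ∧ p i < p j ∧ p j < p k) :
    ∃ i j k : Fin n, i < j ∧ j < k ∧ (p * p) i < (p * p) j ∧ (p * p) j < (p * p) k := by
  obtain ⟨t, -, ht, hp⟩ := exists_subset_strictAntiOn_card_le_two_mul_card (s := univ)
    p.injective.injOn fun ⟨i, _, j, _, k, _, hijk⟩ => h ⟨i, j, k, hijk⟩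
  rw [card_univ, Fintype.card_fin] at ht
  by_contra hsq
  obtain ⟨u, hut, hu, hp2⟩ := exists_subset_strictAntiOn_card_le_two_mul_card (s := t)
    (p * p).injective.injOn fun ⟨i, _, j, _, k, _, hijk⟩ => hsq ⟨i, j, k, hijk⟩
  exact h (p.exists_increasing_triple_of_strictAntiOn_of_strictAntiOn_mul_self (by omega)
    (hp.mono (coe_subset.2 hut)) hp2)
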